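/- arXiv:1707.00579 — 2 statements merged into one kernel-verified Lean document; each statement's English description precedes it below -/
import Mathlib

section
/- Let N, D, M, K be natural numbers, let v ∈ ℂ^N and p ∈ ℝ^D. Suppose C_1, …, C_M ∈ ℂ^{N×N} are Hermitian matrices, c_1, …, c_M ∈ ℝ^D and b_1, …, b_M ∈ ℝ satisfy Re(tr(C_m · v v^H)) + c_m^T p < b_m for every m ∈ {1,…,M}. Further, for each n ∈ {1,…,K} let S_n ⊆ ℝ^2 be a convex set, let x_n lie in the interior of S_n, and let w_n ∈ ℝ^2. Then there exists ε > 0 such that the matrix V = v v^H + ε I is Hermitian positive definite, Re(tr(C_m V)) + c_m^T p < b_m for every m ∈ {1,…,M}, and x_n + ε w_n ∈ S_n for every n ∈ {1,…,K}. -/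
/-!
The trace inequalities and the memberships `x n + ε • w n ∈ S n` are open conditions in `ε` that
hold at `ε = 0` (the latter because `x n` is interior), so they hold for all small `ε > 0`; and
`v vᴴ + ε I` is positive definite for every `ε > 0`, as a positive semidefinite matrix plus a
positive definite one.
-/

open Matrix ComplexOrder Filter Topology

theorem eventually_add_smul_mem_of_mem_interior {𝕜 E : Type*} [Semiring 𝕜] [TopologicalSpace 𝕜]
    [AddCommMonoid E] [TopologicalSpace E] [Module 𝕜 E] [ContinuousSMul 𝕜 E] [ContinuousAdd E]
    {S : Set E} {x : E} (hx : x ∈ interior S) (w : E) :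
    ∀ᶠ ε : 𝕜 in 𝓝 0, x + ε • w ∈ S := by
  have hline : Tendsto (fun ε : 𝕜 => x + ε • w) (𝓝 0) (𝓝 x) := by
    simpa using tendsto_const_nhds.add ((tendsto_id (x := 𝓝 (0 : 𝕜))).smul_const w)
  exact hline (mem_interior_iff_mem_nhds.mp hx)

theorem Matrix.eventually_re_trace_mul_add_smul_one_lt {n : Type*} [Fintype n] [DecidableEq n]
    {C A : Matrix n n ℂ} {r b : ℝ} (h : (trace (C * A)).re + r < b) :
    ∀ᶠ ε : ℝ in 𝓝 0, (trace (C * (A + (ε : ℂ) • 1))).re + r < b := by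
  have hcont : Continuous fun ε : ℝ => (trace (C * (A + (ε : ℂ) • 1))).re + r := by
    fun_prop
  exact hcont.continuousAt.eventually_lt continuousAt_const (by simpa using h)

theorem stmt_0_general (N D M K : ℕ)
    (v : Fin N → ℂ) (p : Fin D → ℝ)
    (C : Fin M → Matrix (Fin N) (Fin N) ℂ)
    (c : Fin M → Fin D → ℝ) (b : Fin M → ℝ)
    (hstrict : ∀ m : Fin M,
      (Matrix.trace (C m * Matrix.of fun i j => v i * star (v j))).re
        + ∑ i, c m i * p i < b m)
    (S : Fin K → Set (Fin 2 → ℝ))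
    (x : Fin K → Fin 2 → ℝ) (hx : ∀ n, x n ∈ interior (S n))
    (w : Fin K → Fin 2 → ℝ) :
    ∃ ε : ℝ, 0 < ε ∧
      (Matrix.of (fun i j => v i * star (v j))
        + (ε : ℂ) • (1 : Matrix (Fin N) (Fin N) ℂ)).PosDef ∧
      (∀ m : Fin M,
        (Matrix.trace (C m * (Matrix.of (fun i j => v i * star (v j))
          + (ε : ℂ) • (1 : Matrix (Fin N) (Fin N) ℂ)))).re
          + ∑ i, c m i * p i < b m) ∧
      (∀ n : Fin K, x n + ε • w n ∈ S n) := by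
  have hsmall := (eventually_all.2 fun m => eventually_re_trace_mul_add_smul_one_lt (hstrict m)).and
    (eventually_all.2 fun n => eventually_add_smul_mem_of_mem_interior (hx n) (w n))
  obtain ⟨ε, ⟨htrace, hmem⟩, hε⟩ :=
    ((hsmall.filter_mono nhdsWithin_le_nhds).and
      (self_mem_nhdsWithin : ∀ᶠ ε in 𝓝[>] (0 : ℝ), 0 < ε)).exists
  have hposdef : (vecMulVec v (star v) + (ε : ℂ) • 1).PosDef :=
    PosDef.posSemidef_add (posSemidef_vecMulVec_self_star v) (PosDef.one.smul (by exact_mod_cast hε))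
  exact ⟨ε, hε, hposdef, htrace, hmem⟩

/-- Slater point construction for the semidefinite relaxation
(Theorem 1 of the paper). -/
theorem stmt_0 (N D M K : ℕ)
    (v : Fin N → ℂ) (p : Fin D → ℝ)
    (C : Fin M → Matrix (Fin N) (Fin N) ℂ) (hC : ∀ m, (C m).IsHermitian)
    (c : Fin M → Fin D → ℝ) (b : Fin M → ℝ)
    (hstrict : ∀ m : Fin M,
      (Matrix.trace (C m * Matrix.of fun i j => v i * star (v j))).re
        + ∑ i, c m i * p i < b m)
    (S : Fin K → Set (Fin 2 → ℝ)) (hSconv : ∀ n, Convex ℝ (S n))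
    (x : Fin K → Fin 2 → ℝ) (hx : ∀ n, x n ∈ interior (S n))
    (w : Fin K → Fin 2 → ℝ) :
    ∃ ε : ℝ, 0 < ε ∧
      (Matrix.of (fun i j => v i * star (v j))
        + (ε : ℂ) • (1 : Matrix (Fin N) (Fin N) ℂ)).PosDef ∧
      (∀ m : Fin M,
        (Matrix.trace (C m * (Matrix.of (fun i j => v i * star (v j))
          + (ε : ℂ) • (1 : Matrix (Fin N) (Fin N) ℂ)))).re
          + ∑ i, c m i * p i < b m) ∧
      (∀ n : Fin K, x n + ε • w n ∈ S n) :=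
  stmt_0_general N D M K v p C c b hstrict S x hx w
end

section
/- Let G be a tree on the vertex set {1, …, N}, i.e., a connected acyclic simple graph. Let m : {1, …, N} → ℝ satisfy m_i > 0 for all i, and for each pair of adjacent vertices i, j let W_{ij} ∈ ℂ satisfy W_{ji} = conj(W_{ij}) and |W_{ij}|² = m_i · m_j. Then there exists a vector v ∈ ℂ^N such that |v_i|² = m_i for every vertex i and v_i · conj(v_j) = W_{ij} for every pair of adjacent vertices i, j. -/
/-!
Normalise `W i j` to the unit complex number `u i j = W i j / √(m i m j)`; the hypotheses make
`u` a `Circle`-valued function on darts with `u j i = (u i j)⁻¹`. On a tree every such function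
is a coboundary: multiplying the values of `u⁻¹` along the unique path from a fixed root to `i`
gives `φ i` with `φ i * (φ j)⁻¹ = u i j` on every edge, because the root paths of two adjacent
vertices differ by that one edge. Then `v i = √(m i) * φ i` works.
-/

open SimpleGraph ComplexConjugate

namespace SimpleGraph

variable {V α : Type*} {G : SimpleGraph V}

def Walk.dartProd [Monoid α] (f : G.Dart → α) {u w : V} (p : G.Walk u w) : α :=
  (p.darts.map f).prod

theorem Walk.dartProd_concat [Monoid α] (f : G.Dart → α) {u v w : V} (p : G.Walk u v)
    (h : G.Adj v w) : (p.concat h).dartProd f = p.dartProd f * f ⟨(v, w), h⟩ := by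
  simp [dartProd, Walk.darts_concat]

theorem IsAcyclic.eq_concat_or_eq_concat (hG : G.IsAcyclic) {r i j : V} {p : G.Walk r i}
    {q : G.Walk r j} (hp : p.IsPath) (hq : q.IsPath) (hij : G.Adj i j) :
    q = p.concat hij ∨ p = q.concat hij.symm := by
  by_cases hi : i ∈ q.support
  · exact .inl (hG.path_concat hp hq hij hi)
  · exact .inr (hG.path_concat hq hp hij.symm
      (hG.mem_support_of_ne_mem_support_of_adj_of_isPath hp hq hij hi))

theorem IsTree.exists_potential [Group α] (hG : G.IsTree) (f : G.Dart → α)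
    (hf : ∀ d, f d.symm = (f d)⁻¹) : ∃ φ : V → α, ∀ d : G.Dart, φ d.snd = φ d.fst * f d := by
  obtain ⟨r⟩ := hG.connected.nonempty
  choose p hp _ using hG.existsUnique_path r
  refine ⟨fun i => (p i).dartProd f, fun ⟨⟨i, j⟩, hij⟩ => ?_⟩
  rcases hG.isAcyclic.eq_concat_or_eq_concat (hp i) (hp j) hij with hj | hi
  · simp only [hj, Walk.dartProd_concat]
  · have hji : f ⟨(j, i), hij.symm⟩ = (f ⟨(i, j), hij⟩)⁻¹ := hf ⟨(i, j), hij⟩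
    simp only [hi, Walk.dartProd_concat, hji, inv_mul_cancel_right]

end SimpleGraph

theorem Complex.norm_div_sqrt_eq_one {z : ℂ} {a : ℝ} (ha : 0 < a) (h : ‖z‖ ^ 2 = a) :
    ‖z / (√a : ℂ)‖ = 1 := by
  have hz : ‖z‖ = √a := by rw [← h, Real.sqrt_sq (norm_nonneg z)]
  rw [norm_div, Complex.norm_real, Real.norm_of_nonneg (Real.sqrt_nonneg a), hz,
    div_self (Real.sqrt_pos.2 ha).ne']

/-- PSD rank-1 matrix completion on a tree ([Th. 5, Bose2012b],
used for Corollary 2 and the bus voltage recovery of Section V-C): given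
positive prescribed squared magnitudes `m i` and, on every edge of a tree,
prescribed products `W i j` with `W j i = conj (W i j)` and `|W i j|² = m i · m j`,
there is a vector `v` with `|v i|² = m i` and `v i · conj (v j) = W i j` on
every edge. -/
theorem stmt_16 (N : ℕ) (G : SimpleGraph (Fin N)) (hG : G.IsTree)
    (m : Fin N → ℝ) (hm : ∀ i, 0 < m i)
    (W : Fin N → Fin N → ℂ)
    (hWherm : ∀ i j, G.Adj i j → W j i = star (W i j))
    (hWmag : ∀ i j, G.Adj i j → ‖W i j‖ ^ 2 = m i * m j) :
    ∃ v : Fin N → ℂ,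
      (∀ i, ‖v i‖ ^ 2 = m i) ∧
      (∀ i j, G.Adj i j → v i * star (v j) = W i j) := by
  let u : G.Dart → Circle := fun d => ⟨W d.fst d.snd / √(m d.fst * m d.snd),
    mem_sphere_zero_iff_norm.2 <| Complex.norm_div_sqrt_eq_one (mul_pos (hm _) (hm _))
      (hWmag _ _ d.adj)⟩
  have hu_symm : ∀ d, u d.symm = (u d)⁻¹ := fun ⟨⟨i, j⟩, hij⟩ => by
    ext
    rw [Circle.coe_inv_eq_conj]
    simp [u, hWherm i j hij, mul_comm (m j)]
  obtain ⟨φ, hφ⟩ := hG.exists_potential (fun d => (u d)⁻¹) (by simp [hu_symm])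
  refine ⟨fun i => (√(m i) : ℂ) * φ i, fun i => ?_, fun i j hij => ?_⟩
  · rw [norm_mul, Circle.norm_coe, Complex.norm_real, Real.norm_of_nonneg (Real.sqrt_nonneg _),
      mul_one, Real.sq_sqrt (hm i).le]
  · have hφu : (φ i : ℂ) * conj (φ j : ℂ) = W i j / √(m i * m j) := by
      rw [← Circle.coe_inv_eq_conj, ← Circle.coe_mul, hφ ⟨(i, j), hij⟩, mul_inv_rev, inv_inv,
        mul_inv_cancel_comm_assoc]
    have hsqrt : (√(m i * m j) : ℂ) ≠ 0 := by
      exact_mod_cast (Real.sqrt_pos.2 (mul_pos (hm i) (hm j))).ne'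
    calc (√(m i) * φ i : ℂ) * star (√(m j) * φ j : ℂ)
        = √(m i * m j) * (φ i * conj (φ j : ℂ)) := by
          rw [Real.sqrt_mul (hm i).le, star_mul', RCLike.star_def, Complex.conj_ofReal,
            Complex.ofReal_mul]
          ring
      _ = W i j := by rw [hφu, mul_div_cancel₀ _ hsqrt]
end
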